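/- Let (𝒜, ℬ) be a cotorsion pair in a Grothendieck category 𝒢 cogenerated by a set {A_i}, with a generator G ∈ 𝒜. Then the induced cotorsion pair (dg-𝒜, ℬ̃) on chain complexes is cogenerated by the set { Sⁿ(G) : n ∈ ℤ } ∪ { Sⁿ(A_i) : n ∈ ℤ, i ∈ I }. -/

import Mathlib

open CategoryTheory Limits

universe v u

/-- `Ext¹(A, B) = 0`, expressed by the splitting of every short exact sequence
`0 → B → T → A → 0`. -/
def Ext1IsZero {C : Type*} [Category C] [Abelian C] (A B : C) : Prop :=
  ∀ (T : C) (k : B ⟶ T) (r : T ⟶ A) (w : k ≫ r = 0),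
    Mono k → Epi r → (ShortComplex.mk k r w).Exact → ∃ s : A ⟶ T, s ≫ r = 𝟙 A

/-- The sphere complex `Sⁿ(A)`: the chain complex with `A` concentrated in degree `n`. -/
noncomputable def sphere {𝒢 : Type u} [Category.{v} 𝒢] [Abelian 𝒢] (n : ℤ) (A : 𝒢) :
    ChainComplex 𝒢 ℤ :=
  (HomologicalComplex.single 𝒢 (ComplexShape.down ℤ) n).obj A

/-!
Everything rests on one observation: if `Ext¹(C, X) = 0` and `0 → K → L → C → 0` is short
exact, every map `K → X` extends to `L` (push the sequence out along the map and split it).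
For an extension `0 → Zₙ X → W → A → 0`, extending the inclusion `Sⁿ(Zₙ X) → X` along
`Sⁿ(Zₙ X) → Sⁿ(W)` yields a retraction `W → Zₙ X`, so `Ext¹(Sⁿ(A), X) = 0` forces
`Ext¹(A, Zₙ X) = 0`. Extending along `Sⁿ(G) → Dⁿ⁺¹(G)` shows that every cycle `G → Xₙ` is a
boundary, and since `G` is a separator, `X` is exact.
Conversely, if `X` is exact at `n - 1`, taking `n`-cycles of `0 → X → T → Sⁿ(A) → 0` gives a
short exact sequence `0 → Zₙ X → Zₙ T → A → 0`, and a splitting of it splits the original one.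
-/

section

variable {C : Type*} [Category C] [Abelian C]

lemma Ext1IsZero.of_iso {A A' B : C} (h : Ext1IsZero A B) (e : A' ≅ A) : Ext1IsZero A' B := by
  intro T k r w hk hr hexact
  let e' : ShortComplex.mk k r w ≅ ShortComplex.mk k (r ≫ e.hom) (by simp [reassoc_of% w]) :=
    ShortComplex.isoMk (Iso.refl _) (Iso.refl _) e (by simp) (by simp)
  have hexact' := ShortComplex.exact_of_iso e' hexact
  obtain ⟨s, hs⟩ := h T k _ _ hk inferInstance hexact'
  exact ⟨e.hom ≫ s, by rw [← cancel_mono e.hom]; simp [hs]⟩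

lemma Ext1IsZero.exists_extension {S : ShortComplex C} {B : C} (h : Ext1IsZero S.X₃ B)
    (hS : S.ShortExact) (f : S.X₁ ⟶ B) : ∃ t : S.X₂ ⟶ B, S.f ≫ t = f := by
  have := hS.mono_f
  have := hS.epi_g
  let p : pushout f S.f ⟶ S.X₃ := pushout.desc 0 S.g (by simp)
  have hp : pushout.inl f S.f ≫ p = 0 := pushout.inl_desc _ _ _
  have hinr : pushout.inr f S.f ≫ p = S.g := pushout.inr_desc _ _ _
  have hexact : (ShortComplex.mk _ _ hp).Exact := by
    rw [ShortComplex.exact_iff_exact_up_to_refinements]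
    intro T x hx
    obtain ⟨T', π, _, b, l, hπ⟩ := (IsPushout.of_hasPushout f S.f).hom_eq_add_up_to_refinements x
    have hl : l ≫ S.g = 0 := by
      have := π ≫= hx
      simpa [reassoc_of% hπ, hp, hinr] using this
    obtain ⟨T'', π', _, k, hk⟩ := hS.exact.exact_up_to_refinements l hl
    refine ⟨T'', π' ≫ π, inferInstance, π' ≫ b + k ≫ f, ?_⟩
    simp [hπ, reassoc_of% hk, pushout.condition]
  have : Epi p := epi_of_epi_fac hinr
  obtain ⟨s, hs⟩ := h _ _ p hp inferInstance inferInstance hexact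
  let σ := ShortComplex.Splitting.ofExactOfSection _ hexact s hs inferInstance
  exact ⟨pushout.inr f S.f ≫ σ.r, by rw [← pushout.condition_assoc, σ.f_r, Category.comp_id]⟩

lemma CategoryTheory.IsSeparator.epi_of_forall_exists_lift {G : C} (hG : IsSeparator G)
    {P Q : C} (f : P ⟶ Q) (h : ∀ g : G ⟶ Q, ∃ u : G ⟶ P, u ≫ f = g) : Epi f := by
  refine Abelian.epi_of_cokernel_π_eq_zero _ (hG.def _ _ fun g => ?_)
  obtain ⟨u, rfl⟩ := h g
  simp

end

namespace HomologicalComplex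

variable {C ι : Type*} [Category C] [Abelian C] {c : ComplexShape ι}

lemma epi_cyclesMap_of_exactAt {S : ShortComplex (HomologicalComplex C c)} (hS : S.ShortExact)
    {i j : ι} (hij : c.Rel i j) (h : S.X₁.ExactAt j) : Epi (cyclesMap S.g i) := by
  -- Lift a cycle `z` of `S.X₃` to `x₂` in `S.X₂`; then `d x₂` comes from a cycle `x₁` of `S.X₁`,
  -- which is a boundary `d y` by exactness, and `x₂ - y` is a cycle lifting `z`.
  have hSj : (ShortComplex.mk (S.f.f j) (S.g.f j) (by rw [← comp_f, S.zero, zero_f])).Exact :=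
    (hS.map_of_exact (eval C c j)).exact
  have : Epi (S.g.f i) := (hS.map_of_exact (eval C c i)).epi_g
  have : Mono (S.f.f (c.next j)) := (hS.map_of_exact (eval C c (c.next j))).mono_f
  rw [epi_iff_surjective_up_to_refinements]
  intro A z
  obtain ⟨A₁, π₁, _, x₂, hx₂⟩ :=
    surjective_up_to_refinements_of_epi (S.g.f i) (z ≫ S.X₃.iCycles i)
  obtain ⟨A₂, π₂, _, x₁, hx₁⟩ := hSj.exact_up_to_refinements (x₂ ≫ S.X₂.d i j) (by
    dsimp only
    rw [Category.assoc, ← S.g.comm, ← reassoc_of% hx₂]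
    simp)
  dsimp only at hx₁
  have hx₁d : x₁ ≫ S.X₁.d j (c.next j) = 0 := by
    rw [← cancel_mono (S.f.f (c.next j)), Category.assoc, ← S.f.comm, ← reassoc_of% hx₁]
    simp
  obtain ⟨A₃, π₃, _, y, hy⟩ := (S.X₁.exactAt_iff_exact_up_to_refinements i j (c.next j)
    (c.prev_eq' hij) rfl).1 h x₁ hx₁d
  refine ⟨A₃, π₃ ≫ π₂ ≫ π₁, inferInstance,
    S.X₂.liftCycles (π₃ ≫ π₂ ≫ x₂ - y ≫ S.f.f i) j (c.next_eq' hij) ?_, ?_⟩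
  · rw [Preadditive.sub_comp, sub_eq_zero, Category.assoc, Category.assoc, hx₁,
      reassoc_of% hy, Category.assoc, S.f.comm]
  · rw [← cancel_mono (S.X₃.iCycles i)]
    have hfg : S.f.f i ≫ S.g.f i = 0 := by rw [← comp_f, S.zero, zero_f]
    simp [hx₂, hfg]

end HomologicalComplex

namespace ChainComplex

open HomologicalComplex

variable {𝒢 : Type u} [Category.{v} 𝒢] [Abelian 𝒢]

/-- The disk `Dⁿ⁺¹(A)`: `A` in degrees `n + 1` and `n`, joined by the identity. -/
noncomputable abbrev disk (n : ℤ) (A : 𝒢) : ChainComplex 𝒢 ℤ :=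
  double (𝟙 A) (ComplexShape.down_mk (n + 1) n rfl)

noncomputable def sphereToDisk (n : ℤ) (A : 𝒢) :
    (single 𝒢 (ComplexShape.down ℤ) n).obj A ⟶ disk n A :=
  mkHomFromSingle (doubleXIso₁ _ _ (by omega)).inv
    (fun _ _ => by rw [double_d_eq_zero₀ _ _ _ _ (by omega), comp_zero])

noncomputable def diskToSphere (n : ℤ) (A : 𝒢) :
    disk n A ⟶ (single 𝒢 (ComplexShape.down ℤ) (n + 1)).obj A :=
  mkHomFromDouble _ (by omega)
    (singleObjXSelf _ _ A).inv 0 (by simp) (by simp)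

lemma sphereToDisk_f (n : ℤ) (A : 𝒢) :
    (sphereToDisk n A).f n = (singleObjXSelf _ _ A).hom ≫ (doubleXIso₁ _ _ (by omega)).inv :=
  mkHomFromSingle_f ..

lemma diskToSphere_f (n : ℤ) (A : 𝒢) :
    (diskToSphere n A).f (n + 1) = (doubleXIso₀ _ _).hom ≫ (singleObjXSelf _ _ A).inv :=
  mkHomFromDouble_f₀ ..

lemma sphereToDisk_comp_diskToSphere (n : ℤ) (A : 𝒢) :
    sphereToDisk n A ≫ diskToSphere n A = 0 := by
  apply from_single_hom_ext
  simp [sphereToDisk, diskToSphere]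

lemma shortExact_sphereToDisk_diskToSphere (n : ℤ) (A : 𝒢) :
    (ShortComplex.mk _ _ (sphereToDisk_comp_diskToSphere n A)).ShortExact := by
  apply shortExact_of_degreewise_shortExact
  intro k
  by_cases h₁ : k = n + 1
  · subst k
    refine (ShortComplex.Splitting.ofIsZeroOfIsIso _
      (isZero_single_obj_X (ComplexShape.down ℤ) n A _ (by omega)) ?_).shortExact
    change IsIso ((diskToSphere n A).f (n + 1))
    rw [diskToSphere_f]
    exact (doubleXIso₀ _ _ ≪≫ (singleObjXSelf _ _ A).symm).isIso_hom
  by_cases h₀ : k = n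
  · subst k
    refine (ShortComplex.Splitting.ofIsIsoOfIsZero _ ?_
      (isZero_single_obj_X (ComplexShape.down ℤ) (n + 1) A _ (by omega))).shortExact
    change IsIso ((sphereToDisk n A).f n)
    rw [sphereToDisk_f]
    exact (singleObjXSelf _ _ A ≪≫ (doubleXIso₁ _ _ (by omega)).symm).isIso_hom
  · have h₂ := isZero_double_X (𝟙 A) (ComplexShape.down_mk (n + 1) n rfl) k h₁ h₀
    exact (ShortComplex.Splitting.ofIsZeroOfIsIso _
      (isZero_single_obj_X (ComplexShape.down ℤ) _ _ _ h₀)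
      (h₂.isIso (isZero_single_obj_X (ComplexShape.down ℤ) _ _ _ h₁) _)).shortExact

lemma exists_comp_d_eq_of_ext1IsZero_sphere {A : 𝒢} {X : ChainComplex 𝒢 ℤ} {n : ℤ}
    (h : Ext1IsZero (sphere (n + 1) A) X) (z : A ⟶ X.X n) (hz : z ≫ X.d n (n - 1) = 0) :
    ∃ u : A ⟶ X.X (n + 1), u ≫ X.d (n + 1) n = z := by
  let φ : (single 𝒢 (ComplexShape.down ℤ) n).obj A ⟶ X := mkHomFromSingle z (fun k hk => by
    obtain rfl : k = n - 1 := by simp at hk; omega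
    exact hz)
  obtain ⟨t, ht⟩ : ∃ t : disk n A ⟶ X, sphereToDisk n A ≫ t = φ :=
    h.exists_extension (shortExact_sphereToDisk_diskToSphere n A) φ
  have htn :
      (doubleXIso₁ (𝟙 A) (ComplexShape.down_mk (n + 1) n rfl) (by omega)).inv ≫ t.f n = z := by
    have := congr_arg (fun ψ => ψ.f n) ht
    simp only [comp_f, sphereToDisk_f, φ, mkHomFromSingle_f, Category.assoc] at this
    exact (cancel_epi _).1 this
  refine ⟨(doubleXIso₀ _ _).inv ≫ t.f (n + 1), ?_⟩
  rw [Category.assoc, t.comm, double_d _ _ (by omega)]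
  simpa using htn

lemma ext1IsZero_cycles_of_ext1IsZero_sphere {A : 𝒢} {X : ChainComplex 𝒢 ℤ} {n : ℤ}
    (h : Ext1IsZero (sphere n A) X) : Ext1IsZero A (X.cycles n) := by
  intro W k p w hk hp hexact
  have hS : (ShortComplex.mk k p w).ShortExact := .mk' hexact hk hp
  let φ : (single 𝒢 (ComplexShape.down ℤ) n).obj (X.cycles n) ⟶ X :=
    mkHomFromSingle (X.iCycles n) (fun _ _ => X.iCycles_d _ _)
  obtain ⟨t, ht⟩ : ∃ t : (single 𝒢 (ComplexShape.down ℤ) n).obj W ⟶ X,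
      (single 𝒢 (ComplexShape.down ℤ) n).map k ≫ t = φ :=
    h.exists_extension (hS.map_of_exact (single 𝒢 (ComplexShape.down ℤ) n)) φ
  let r : W ⟶ X.cycles n := X.liftCycles ((singleObjXSelf _ n W).inv ≫ t.f n) (n - 1) (by simp)
    (by rw [Category.assoc, t.comm, single_obj_d, zero_comp, comp_zero])
  have hr : k ≫ r = 𝟙 _ := by
    have := congr_arg (fun ψ => ψ.f n) ht
    simp only [comp_f, single_map_f_self, φ, mkHomFromSingle_f, Category.assoc] at this
    rw [← cancel_mono (X.iCycles n), Category.assoc, liftCycles_i, Category.id_comp]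
    exact (cancel_epi _).1 this
  let σ := ShortComplex.Splitting.ofExactOfRetraction _ hexact r hr hp
  exact ⟨σ.s, σ.s_g⟩

lemma exactAt_of_ext1IsZero_sphere {G : 𝒢} (hG : IsSeparator G) {X : ChainComplex 𝒢 ℤ} {n : ℤ}
    (h : Ext1IsZero (sphere (n + 1) G) X) : X.ExactAt n := by
  rw [X.exactAt_iff' (n + 1) n (n - 1) (by simp) (by simp), ShortComplex.exact_iff_epi_toCycles]
  refine hG.epi_of_forall_exists_lift _ fun g => ?_
  let S := X.sc' (n + 1) n (n - 1)
  obtain ⟨u, hu⟩ := exists_comp_d_eq_of_ext1IsZero_sphere h (g ≫ S.iCycles)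
    ((Category.assoc _ _ _).trans ((g ≫= S.iCycles_g).trans comp_zero))
  exact ⟨u, by
    rw [← cancel_mono S.iCycles]
    exact (Category.assoc _ _ _).trans ((u ≫= S.toCycles_i).trans hu)⟩

lemma ext1IsZero_sphere_of_exactAt {A : 𝒢} {X : ChainComplex 𝒢 ℤ} {n : ℤ}
    (hX : X.ExactAt (n - 1)) (h : Ext1IsZero A (X.cycles n)) : Ext1IsZero (sphere n A) X := by
  change Ext1IsZero ((single 𝒢 (ComplexShape.down ℤ) n).obj A) X
  intro T k r w hk hr hexact
  have hS : (ShortComplex.mk k r w).ShortExact := .mk' hexact hk hr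
  obtain ⟨σ, hσ⟩ := h.of_iso (singleObjCyclesSelfIso _ n A) _ _ _ _ inferInstance
    (epi_cyclesMap_of_exactAt hS (by simp) hX) (cycles_left_exact _ hexact n)
  refine ⟨mkHomFromSingle ((singleObjCyclesSelfIso _ n A).inv ≫ σ ≫ T.iCycles n) (by simp), ?_⟩
  apply from_single_hom_ext
  rw [comp_f, mkHomFromSingle_f, Category.assoc, Category.assoc, Category.assoc,
    ← cyclesMap_i, reassoc_of% hσ]
  simp

end ChainComplex

theorem stmt7_general {𝒢 : Type u} [Category.{v} 𝒢] [Abelian 𝒢]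
    (𝒜 ℬ : Set 𝒢)
    (hpair : (∀ X : 𝒢, X ∈ 𝒜 ↔ ∀ B ∈ ℬ, Ext1IsZero X B) ∧
      (∀ Y : 𝒢, Y ∈ ℬ ↔ ∀ A ∈ 𝒜, Ext1IsZero A Y))
    {ι : Type v} (A : ι → 𝒢) (hcog : ∀ Y : 𝒢, Y ∈ ℬ ↔ ∀ i, Ext1IsZero (A i) Y)
    (G : 𝒢) (hGsep : IsSeparator G) (hG : G ∈ 𝒜) (X : ChainComplex 𝒢 ℤ) :
    ((∀ n : ℤ, Ext1IsZero (sphere n G) X) ∧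
        ∀ (n : ℤ) (i : ι), Ext1IsZero (sphere n (A i)) X) ↔
      ((∀ n : ℤ, X.ExactAt n) ∧ ∀ n : ℤ, X.cycles n ∈ ℬ) := by
  constructor
  · rintro ⟨hGX, hAX⟩
    refine ⟨fun n => ChainComplex.exactAt_of_ext1IsZero_sphere hGsep (hGX (n + 1)), fun n => ?_⟩
    exact (hcog _).2 fun i => ChainComplex.ext1IsZero_cycles_of_ext1IsZero_sphere (hAX n i)
  · rintro ⟨hexact, hcycles⟩
    refine ⟨fun n => ?_, fun n i => ?_⟩
    · exact ChainComplex.ext1IsZero_sphere_of_exactAt (hexact _) ((hpair.2 _).1 (hcycles n) G hG)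
    · exact ChainComplex.ext1IsZero_sphere_of_exactAt (hexact _) ((hcog _).1 (hcycles n) i)

/-- Let `(𝒜, ℬ)` be a cotorsion pair in a Grothendieck category `𝒢`
cogenerated by a set `{A i}` and with a generator `G ∈ 𝒜`.  Then the induced cotorsion
pair `(dg-𝒜, ℬ̃)` on chain complexes is cogenerated by the spheres `Sⁿ(G)` and `Sⁿ(A i)`;
i.e. a complex `X` lies in `ℬ̃` (it is exact with all cycles in `ℬ`) if and only if
`Ext¹` of every such sphere into `X` vanishes. -/
theorem stmt7 {𝒢 : Type u} [Category.{v} 𝒢] [Abelian 𝒢] [HasColimits 𝒢] [AB5 𝒢]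
    (𝒜 ℬ : Set 𝒢)
    (hpair : (∀ X : 𝒢, X ∈ 𝒜 ↔ ∀ B ∈ ℬ, Ext1IsZero X B) ∧
      (∀ Y : 𝒢, Y ∈ ℬ ↔ ∀ A ∈ 𝒜, Ext1IsZero A Y))
    {ι : Type v} (A : ι → 𝒢) (hcog : ∀ Y : 𝒢, Y ∈ ℬ ↔ ∀ i, Ext1IsZero (A i) Y)
    (G : 𝒢) (hGsep : IsSeparator G) (hG : G ∈ 𝒜) (X : ChainComplex 𝒢 ℤ) :
    ((∀ n : ℤ, Ext1IsZero (sphere n G) X) ∧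
        ∀ (n : ℤ) (i : ι), Ext1IsZero (sphere n (A i)) X) ↔
      ((∀ n : ℤ, X.ExactAt n) ∧ ∀ n : ℤ, X.cycles n ∈ ℬ) :=
  stmt7_general 𝒜 ℬ hpair A hcog G hGsep hG X
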